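/- Let Z be a T-valued random variable with law μ that is c-good for some c ∈ (0,1], i.e. μ(A) ≥ c·|A| for every measurable A ⊆ T (|·| the Haar/Lebesgue measure on the circle T = R/Z). Define the operator B_Z on L_p(T) by (B_Z f)(x) = E f(x ⊕ Z) = ∫ f(x ⊕ s) dμ(s). Then for every 1 ≤ p < ∞ and every f ∈ L_p(T) with ∫_T f = 0, one has ‖B_Z f‖_p ≤ (1 − c)·‖f‖_p. -/

import Mathlib

/-!
Since `μ ≥ c · volume`, we can write `μ = σ + c · volume` with `σ` a positive measure of mass
`1 - c`. Convolving a mean-zero `f` with `c · volume` gives zero, so `B_Z f = σ ⋆ f` almost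
everywhere, and Minkowski's integral inequality (translations being isometries of `L_p`) bounds
`‖σ ⋆ f‖_p` by `σ(T) ‖f‖_p = (1 - c) ‖f‖_p`.
-/

open MeasureTheory ENNReal

/-- Hölder's inequality against the constant function `1`. -/
theorem lintegral_rpow_le_measure_univ_rpow_mul {α : Type*} [MeasurableSpace α] (σ : Measure α)
    {r : ℝ} (hr : 1 ≤ r) {h : α → ℝ≥0∞} (hh : AEMeasurable h σ) :
    (∫⁻ s, h s ∂σ) ^ r ≤ σ Set.univ ^ (r - 1) * ∫⁻ s, h s ^ r ∂σ := by
  obtain rfl | hr1 := hr.eq_or_lt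
  · simp
  have hconj := Real.HolderConjugate.conjExponent hr1
  have hölder := ENNReal.lintegral_mul_le_Lp_mul_Lq σ hconj hh aemeasurable_const
    (g := fun _ => (1 : ℝ≥0∞))
  simp only [Pi.mul_apply, mul_one, ENNReal.one_rpow, lintegral_one] at hölder
  have hexp : (1 / r.conjExponent) * r = r - 1 := by
    rw [Real.conjExponent, one_div_div]; field_simp [(by linarith : r - 1 ≠ 0)]
  calc (∫⁻ s, h s ∂σ) ^ r
      ≤ ((∫⁻ s, h s ^ r ∂σ) ^ (1 / r) * σ Set.univ ^ (1 / r.conjExponent)) ^ r :=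
        ENNReal.rpow_le_rpow hölder (by linarith)
    _ = σ Set.univ ^ (r - 1) * ∫⁻ s, h s ^ r ∂σ := by
        rw [ENNReal.mul_rpow_of_nonneg _ _ (by linarith), ← ENNReal.rpow_mul, ← ENNReal.rpow_mul,
          hexp, one_div_mul_cancel (by linarith), ENNReal.rpow_one, mul_comm]

section Translates

variable {G : Type*} [MeasurableSpace G] [AddGroup G] [MeasurableAdd₂ G]
  (m : Measure G) [SFinite m] [m.IsAddRightInvariant]

theorem quasiMeasurePreserving_add_of_right_invariant (σ : Measure G) [SFinite σ] :
    Measure.QuasiMeasurePreserving (fun q : G × G => q.1 + q.2) (m.prod σ) m :=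
  Measure.quasiMeasurePreserving_fst.comp (measurePreserving_add_prod m σ).quasiMeasurePreserving

theorem lintegral_lintegral_comp_add (σ : Measure G) [SFinite σ] {h : G → ℝ≥0∞}
    (hh : AEMeasurable h m) :
    ∫⁻ x, ∫⁻ s, h (x + s) ∂σ ∂m = σ Set.univ * ∫⁻ x, h x ∂m := by
  rw [lintegral_lintegral_swap (f := fun x s => h (x + s))
    (hh.comp_quasiMeasurePreserving (quasiMeasurePreserving_add_of_right_invariant m σ))]
  simp [lintegral_add_right_eq_self, mul_comm]

theorem MeasureTheory.Integrable.ae_integrable_comp_add (σ : Measure G) [IsFiniteMeasure σ]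
    {E : Type*} [NormedAddCommGroup E] {f : G → E} (hf : Integrable f m) :
    ∀ᵐ x ∂m, Integrable (fun s => f (x + s)) σ := by
  have hqmp := quasiMeasurePreserving_add_of_right_invariant m σ
  refine Integrable.prod_right_ae (f := fun q : G × G => f (q.1 + q.2))
    ⟨hf.1.comp_quasiMeasurePreserving hqmp, ?_⟩
  rw [hasFiniteIntegral_iff_enorm, lintegral_prod (fun q : G × G => ‖f (q.1 + q.2)‖ₑ)
      (hf.1.enorm.comp_quasiMeasurePreserving hqmp),
    lintegral_lintegral_comp_add m σ hf.1.enorm]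
  exact ENNReal.mul_lt_top (measure_lt_top σ _) hf.2

theorem eLpNorm_integral_comp_add_le (σ : Measure G) [IsFiniteMeasure σ] {p : ℝ≥0∞}
    (hp : 1 ≤ p) (hp' : p ≠ ⊤) {g : G → ℝ} (hg : AEStronglyMeasurable g m) :
    eLpNorm (fun x => ∫ s, g (x + s) ∂σ) p m ≤ σ Set.univ * eLpNorm g p m := by
  have hp0 : p ≠ 0 := (zero_lt_one.trans_le hp).ne'
  set r := p.toReal
  have hr : 1 ≤ r := by simpa using ENNReal.toReal_mono hp' hp
  have hslices : ∀ᵐ x ∂m, AEMeasurable (fun s => ‖g (x + s)‖ₑ) σ :=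
    (hg.comp_quasiMeasurePreserving
      (quasiMeasurePreserving_add_of_right_invariant m σ)).prodMk_left.mono
      fun x hx => hx.enorm
  have key : ∫⁻ x, ‖∫ s, g (x + s) ∂σ‖ₑ ^ r ∂m ≤ σ Set.univ ^ r * ∫⁻ x, ‖g x‖ₑ ^ r ∂m :=
    calc ∫⁻ x, ‖∫ s, g (x + s) ∂σ‖ₑ ^ r ∂m
        ≤ ∫⁻ x, (∫⁻ s, ‖g (x + s)‖ₑ ∂σ) ^ r ∂m := lintegral_mono fun x =>
          ENNReal.rpow_le_rpow (enorm_integral_le_lintegral_enorm _) (by linarith)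
      _ ≤ ∫⁻ x, σ Set.univ ^ (r - 1) * ∫⁻ s, ‖g (x + s)‖ₑ ^ r ∂σ ∂m :=
          lintegral_mono_ae <| hslices.mono fun x hx =>
            lintegral_rpow_le_measure_univ_rpow_mul σ hr hx
      _ = σ Set.univ ^ (r - 1) * (σ Set.univ * ∫⁻ x, ‖g x‖ₑ ^ r ∂m) := by
          rw [lintegral_const_mul' _ _ (ENNReal.rpow_ne_top_of_nonneg (by linarith)
              (measure_ne_top σ _)),
            lintegral_lintegral_comp_add m σ (hg.enorm.pow_const r)]
      _ = σ Set.univ ^ r * ∫⁻ x, ‖g x‖ₑ ^ r ∂m := by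
          rw [← mul_assoc]
          congr 1
          conv_rhs => rw [← sub_add_cancel r 1]
          rw [ENNReal.rpow_add_of_nonneg _ _ (by linarith) zero_le_one, ENNReal.rpow_one]
  rw [eLpNorm_eq_lintegral_rpow_enorm_toReal hp0 hp',
    eLpNorm_eq_lintegral_rpow_enorm_toReal hp0 hp']
  calc (∫⁻ x, ‖∫ s, g (x + s) ∂σ‖ₑ ^ r ∂m) ^ (1 / r)
      ≤ (σ Set.univ ^ r * ∫⁻ x, ‖g x‖ₑ ^ r ∂m) ^ (1 / r) :=
        ENNReal.rpow_le_rpow key (by positivity)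
    _ = σ Set.univ * (∫⁻ x, ‖g x‖ₑ ^ r ∂m) ^ (1 / r) := by
        rw [ENNReal.mul_rpow_of_nonneg _ _ (by positivity), ← ENNReal.rpow_mul,
          mul_one_div_cancel (by linarith), ENNReal.rpow_one]

theorem ae_integral_comp_add_add_smul_eq [IsFiniteMeasure m] [m.IsAddLeftInvariant]
    (σ : Measure G) [IsFiniteMeasure σ]
    {a : ℝ≥0∞} (ha : a ≠ ⊤) {f : G → ℝ} (hf : Integrable f m) (hmean : ∫ x, f x ∂m = 0) :
    (fun x => ∫ s, f (x + s) ∂(σ + a • m)) =ᵐ[m] fun x => ∫ s, f (x + s) ∂σ := by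
  filter_upwards [hf.ae_integrable_comp_add m σ, hf.ae_integrable_comp_add m m]
    with x hσ hm
  rw [integral_add_measure hσ (hm.smul_measure ha), integral_smul_measure,
    integral_add_left_eq_self (μ := m) f x, hmean, smul_zero, add_zero]

end Translates

/-- A `c`-good probability measure `μ` on the torus: convolution with `μ` contracts
mean-zero `L_p` functions by a factor `1 - c`. -/
theorem stmt0
    (μ : Measure UnitAddCircle) [IsProbabilityMeasure μ]
    (c : ℝ) (hc : c ∈ Set.Ioc (0 : ℝ) 1)
    (hgood : ∀ A : Set UnitAddCircle, MeasurableSet A →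
      ENNReal.ofReal c * volume A ≤ μ A)
    (p : ℝ≥0∞) (hp : 1 ≤ p) (hp' : p ≠ ⊤)
    (f : UnitAddCircle → ℝ) (hf : MemLp f p volume)
    (hmean : ∫ x, f x = 0) :
    eLpNorm (fun x => ∫ s, f (x + s) ∂μ) p volume
      ≤ ENNReal.ofReal (1 - c) * eLpNorm f p volume := by
  have hle : ENNReal.ofReal c • volume ≤ μ :=
    Measure.le_iff.mpr fun A hA => by simpa using hgood A hA
  have hc_fin : ENNReal.ofReal c ≠ ⊤ := ENNReal.ofReal_ne_top
  have := (volume : Measure UnitAddCircle).smul_finite hc_fin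
  set σ := μ - ENNReal.ofReal c • volume
  have hσ : σ Set.univ = ENNReal.ofReal (1 - c) := by
    rw [Measure.sub_apply MeasurableSet.univ hle]
    simp [ENNReal.ofReal_sub 1 hc.1.le]
  have hae := ae_integral_comp_add_add_smul_eq volume σ hc_fin (hf.integrable hp) hmean
  rw [Measure.sub_add_cancel_of_le hle] at hae
  rw [eLpNorm_congr_ae hae, ← hσ]
  exact eLpNorm_integral_comp_add_le volume σ hp hp' hf.1
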